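/- For every i ≥ 0, consider the pair of genomes forming a single W-shaped path with i adjacencies in G1: on extremities x_0, x_1, …, x_{2i+1}, take Π1 = {{x_{2j-1}, x_{2j}} : 1 ≤ j ≤ i} and Π2 = {{x_{2j}, x_{2j+1}} : 0 ≤ j ≤ i}. Then the number of most parsimonious SCJ scenarios from G1 to G2 equals A_{2i+1}, the number of alternating permutations of size 2i+1. -/

import Mathlib

/-- A genome on an extremity type `V`: a finite set of adjacencies (unordered pairs of
distinct extremities) that are pairwise disjoint (a partial matching). -/
structure Genome (V : Type*) where
  adj : Finset (Sym2 V)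
  not_isDiag : ∀ p ∈ adj, ¬ p.IsDiag
  disj : ∀ p ∈ adj, ∀ q ∈ adj, p ≠ q → ∀ x, x ∈ p → x ∉ q

instance {V : Type*} : Inhabited (Genome V) :=
  ⟨⟨∅, by simp, by simp⟩⟩

variable {V : Type*} [DecidableEq V]

/-- The step from `G` to `G'` is a cut removing the adjacency `p`. -/
def CutsAdj (G G' : Genome V) (p : Sym2 V) : Prop :=
  p ∈ G.adj ∧ G'.adj = G.adj.erase p

/-- The step from `G` to `G'` is a join adding the adjacency `p`
(validity of `G'` forces `p` to be a pair of distinct, currently unmatched extremities). -/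
def JoinsAdj (G G' : Genome V) (p : Sym2 V) : Prop :=
  p ∉ G.adj ∧ G'.adj = insert p G.adj

/-- A single SCJ operation. -/
def SCJStep (G G' : Genome V) : Prop :=
  ∃ p, CutsAdj G G' p ∨ JoinsAdj G G' p

/-- An SCJ scenario from `G1` to `G2`: a finite sequence of genomes starting at `G1`,
ending at `G2`, consecutive ones differing by a single SCJ operation.  A scenario
represented by a list `L` has `L.length - 1` operations. -/
def IsScenario (G1 G2 : Genome V) (L : List (Genome V)) : Prop :=
  L.head? = some G1 ∧ L.getLast? = some G2 ∧ L.Chain' SCJStep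

/-- The SCJ distance: the minimum number of operations in a scenario from `G1` to `G2`. -/
noncomputable def dSCJ (G1 G2 : Genome V) : ℕ :=
  sInf {n | ∃ L, IsScenario G1 G2 L ∧ L.length = n + 1}

/-- A most parsimonious SCJ scenario. -/
def IsMPS (G1 G2 : Genome V) (L : List (Genome V)) : Prop :=
  IsScenario G1 G2 L ∧ L.length = dSCJ G1 G2 + 1

/-- The number of most parsimonious SCJ scenarios from `G1` to `G2`. -/
noncomputable def NumMPS (G1 G2 : Genome V) : ℕ :=
  {L | IsMPS G1 G2 L}.ncard

/-- The `i`-th step of the scenario `L` (steps indexed from `0`) cuts adjacency `p`. -/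
def StepCut (L : List (Genome V)) (i : ℕ) (p : Sym2 V) : Prop :=
  i + 1 < L.length ∧ CutsAdj (L.getD i default) (L.getD (i + 1) default) p

/-- The `i`-th step of the scenario `L` (steps indexed from `0`) joins adjacency `p`. -/
def StepJoin (L : List (Genome V)) (i : ℕ) (p : Sym2 V) : Prop :=
  i + 1 < L.length ∧ JoinsAdj (L.getD i default) (L.getD (i + 1) default) p

/-- `c` is an alternating (up-down) permutation:
`c 0 < c 1 > c 2 < c 3 > …` (i.e. in 1-based notation `c₁ < c₂ > c₃ < …`). -/
def IsAltPerm {n : ℕ} (c : Equiv.Perm (Fin n)) : Prop :=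
  ∀ i : ℕ, ∀ h : i + 1 < n,
    if i % 2 = 0 then c ⟨i, by omega⟩ < c ⟨i + 1, h⟩
    else c ⟨i + 1, h⟩ < c ⟨i, by omega⟩

/-- `A n`, the number of alternating permutations of size `n` (with `A 0 = 1`). -/
noncomputable def altPermCount (n : ℕ) : ℕ :=
  Nat.card {c : Equiv.Perm (Fin n) // IsAltPerm c}

/-!
Each SCJ operation changes the symmetric difference with the target by exactly one adjacency,
so a scenario from `G1` to `G2` has at least `d = |Π1 ∆ Π2|` operations, and `d` are enough
(cut `Π1 \ Π2`, then join `Π2 \ Π1`). A scenario with `d` operations therefore handles every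
adjacency of `Π1 ∆ Π2` exactly once: it is an ordering of these `d` operations all of whose
intermediate adjacency sets are matchings. For the W-shaped pair, `Π1 ∆ Π2` is the path
`0 — 1 — ⋯ — 2i+1`, whose odd edges are cut and even edges joined; an intermediate set is a
matching iff it contains no two consecutive edges, i.e. iff every even edge is joined after the
cuts of its neighbours. Recording for each edge the step at which it is handled and reversing
time, these orderings become exactly the alternating permutations of size `2i+1`.
-/

open Finset

section Matching

variable {W : Type*}

@[ext]
theorem Genome.ext {G G' : Genome W} (h : G.adj = G'.adj) : G = G' := by
  cases G; cases G'; simpa using h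

def IsMatching (s : Finset (Sym2 W)) : Prop :=
  (∀ p ∈ s, ¬ p.IsDiag) ∧ ∀ p ∈ s, ∀ q ∈ s, p ≠ q → ∀ x, x ∈ p → x ∉ q

theorem IsMatching.mono {s t : Finset (Sym2 W)} (ht : IsMatching t) (hst : s ⊆ t) :
    IsMatching s :=
  ⟨fun p hp => ht.1 p (hst hp), fun p hp q hq => ht.2 p (hst hp) q (hst hq)⟩

theorem Genome.isMatching (G : Genome W) : IsMatching G.adj :=
  ⟨G.not_isDiag, G.disj⟩

def Genome.ofIsMatching {s : Finset (Sym2 W)} (h : IsMatching s) : Genome W :=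
  ⟨s, h.1, h.2⟩

end Matching

theorem Finset.symmDiff_singleton_of_mem {α : Type*} [DecidableEq α] {s : Finset α} {a : α}
    (h : a ∈ s) : symmDiff s {a} = s.erase a := by
  ext x; by_cases hx : x = a <;> simp [mem_symmDiff, hx, h]

theorem Finset.symmDiff_singleton_of_notMem {α : Type*} [DecidableEq α] {s : Finset α} {a : α}
    (h : a ∉ s) : symmDiff s {a} = insert a s := by
  ext x; by_cases hx : x = a <;> simp [mem_symmDiff, hx, h]

theorem Finset.card_le_card_symmDiff_singleton_add_one {α : Type*} [DecidableEq α]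
    (s : Finset α) (a : α) : #s ≤ #(symmDiff s {a}) + 1 := by
  by_cases h : a ∈ s
  · rw [symmDiff_singleton_of_mem h, card_erase_add_one h]
  · rw [symmDiff_singleton_of_notMem h]
    exact (card_le_card (subset_insert a s)).trans (Nat.le_succ _)

theorem Finset.exists_eq_of_mem_symmDiff_of_toggle {α : Type*} [DecidableEq α] {n : ℕ} {f : ℕ → Finset α} {p : Fin n → α}
    (hf : ∀ t : Fin n, f (t + 1) = symmDiff (f t) {p t}) {x : α}
    (hx : x ∈ symmDiff (f 0) (f n)) :
    ∃ t, p t = x := by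
  by_contra! hne
  have hstable : ∀ t ≤ n, (x ∈ f t ↔ x ∈ f 0) := by
    intro t
    induction t with
    | zero => simp
    | succ t ih =>
      intro ht
      rw [hf ⟨t, ht⟩, mem_symmDiff, mem_singleton, ← ih (by omega)]
      have := hne ⟨t, ht⟩
      tauto
  simp [mem_symmDiff, hstable n le_rfl] at hx

theorem scjStep_iff {G G' : Genome V} : SCJStep G G' ↔ ∃ p, G'.adj = symmDiff G.adj {p} := by
  refine exists_congr fun p => ⟨?_, fun h => ?_⟩
  · rintro (⟨hp, h⟩ | ⟨hp, h⟩)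
    · rw [h, symmDiff_singleton_of_mem hp]
    · rw [h, symmDiff_singleton_of_notMem hp]
  · by_cases hp : p ∈ G.adj
    · exact .inl ⟨hp, h.trans (symmDiff_singleton_of_mem hp)⟩
    · exact .inr ⟨hp, h.trans (symmDiff_singleton_of_notMem hp)⟩

theorem IsScenario.cons {G0 G1 G2 : Genome V} {L : List (Genome V)} (h : SCJStep G0 G1)
    (hL : IsScenario G1 G2 L) : IsScenario G0 G2 (G0 :: L) := by
  obtain ⟨hh, hl, hc⟩ := hL
  cases L with
  | nil => simp at hh
  | cons G L =>
    obtain rfl : G = G1 := by simpa using hh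
    exact ⟨rfl, by rwa [List.getLast?_cons_cons], List.isChain_cons_cons.mpr ⟨h, hc⟩⟩

theorem IsScenario.card_symmDiff_lt_length {G1 G2 : Genome V} {L : List (Genome V)}
    (hL : IsScenario G1 G2 L) : #(symmDiff G1.adj G2.adj) < L.length := by
  induction L generalizing G1 with
  | nil => simp [IsScenario] at hL
  | cons G L ih =>
    obtain ⟨hh, hl, hc⟩ := hL
    obtain rfl : G = G1 := by simpa using hh
    cases L with
    | nil =>
      obtain rfl : G = G2 := by simpa using hl
      simp
    | cons G' L =>
      obtain ⟨hstep, hc⟩ := List.isChain_cons_cons.mp hc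
      obtain ⟨p, hp⟩ := scjStep_iff.mp hstep
      have := ih ⟨rfl, by rwa [List.getLast?_cons_cons] at hl, hc⟩
      have hΔ : symmDiff G'.adj G2.adj = symmDiff (symmDiff G.adj G2.adj) {p} := by
        rw [hp, symmDiff_right_comm]
      have := card_le_card_symmDiff_singleton_add_one (symmDiff G.adj G2.adj) p
      simp only [List.length_cons, hΔ] at *
      omega

theorem exists_scenario_length_eq (G1 G2 : Genome V) :
    ∃ L, IsScenario G1 G2 L ∧ L.length = #(symmDiff G1.adj G2.adj) + 1 := by
  obtain ⟨n, hn⟩ : ∃ n, #(symmDiff G1.adj G2.adj) = n := ⟨_, rfl⟩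
  induction n generalizing G1 with
  | zero =>
    obtain rfl : G1 = G2 := Genome.ext (symmDiff_eq_bot.mp (card_eq_zero.mp hn))
    exact ⟨[G1], ⟨rfl, rfl, List.isChain_singleton _⟩, by simp⟩
  | succ n ih =>
    -- Cutting from `G1 \ G2`, or joining from `G2 \ G1` once `G1 ⊆ G2`, stays within a genome.
    obtain ⟨p, hpΔ, hsub⟩ : ∃ p ∈ symmDiff G1.adj G2.adj,
        symmDiff G1.adj {p} ⊆ G1.adj ∨ symmDiff G1.adj {p} ⊆ G2.adj := by
      by_cases hG : G1.adj ⊆ G2.adj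
      · obtain ⟨p, hp⟩ := (card_pos (s := symmDiff G1.adj G2.adj)).mp (by omega)
        have hp1 : p ∉ G1.adj := fun h => by simp [mem_symmDiff, h, hG h] at hp
        refine ⟨p, hp, .inr ?_⟩
        rw [symmDiff_singleton_of_notMem hp1]
        exact insert_subset (by simpa [mem_symmDiff, hp1] using hp) hG
      · obtain ⟨p, hp1, hp2⟩ := not_subset.mp hG
        refine ⟨p, by simp [mem_symmDiff, hp1, hp2], .inl ?_⟩
        rw [symmDiff_singleton_of_mem hp1]
        exact erase_subset p _
    let G' : Genome V := Genome.ofIsMatching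
      (hsub.elim G1.isMatching.mono G2.isMatching.mono)
    have hG' : symmDiff G'.adj G2.adj = (symmDiff G1.adj G2.adj).erase p := by
      rw [← symmDiff_singleton_of_mem hpΔ, symmDiff_right_comm]
      rfl
    obtain ⟨L, hL, hlen⟩ := ih G' (by rw [hG', card_erase_of_mem hpΔ, hn]; rfl)
    refine ⟨G1 :: L, hL.cons (scjStep_iff.mpr ⟨p, rfl⟩), ?_⟩
    rw [List.length_cons, hlen, hG', card_erase_of_mem hpΔ]
    omega

theorem dSCJ_eq_card_symmDiff (G1 G2 : Genome V) : dSCJ G1 G2 = #(symmDiff G1.adj G2.adj) := by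
  obtain ⟨L, hL, hlen⟩ := exists_scenario_length_eq G1 G2
  refine le_antisymm (Nat.sInf_le ⟨L, hL, hlen⟩) (le_csInf ⟨_, L, hL, hlen⟩ ?_)
  rintro m ⟨L', hL', hlen'⟩
  have := hL'.card_symmDiff_lt_length
  omega

theorem isMPS_iff {G1 G2 : Genome V} {L : List (Genome V)} :
    IsMPS G1 G2 L ↔ IsScenario G1 G2 L ∧ L.length = #(symmDiff G1.adj G2.adj) + 1 := by
  rw [IsMPS, dSCJ_eq_card_symmDiff]

section Toggle

variable {n : ℕ}

/-- The adjacency set obtained from `A` after the first `t` operations, when the adjacency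
`e k` is cut or joined at step `σ k`. -/
def toggleState (A : Finset (Sym2 V)) (e : Fin n → Sym2 V) (σ : Equiv.Perm (Fin n)) (t : ℕ) :
    Finset (Sym2 V) :=
  symmDiff A ((univ.filter fun k => (σ k : ℕ) < t).image e)

variable {A : Finset (Sym2 V)} {e : Fin n → Sym2 V} {σ σ' : Equiv.Perm (Fin n)}

@[simp]
theorem toggleState_zero : toggleState A e σ 0 = A := by
  simp [toggleState]

theorem toggleState_of_le {t : ℕ} (ht : n ≤ t) :
    toggleState A e σ t = symmDiff A (univ.image e) := by
  rw [toggleState, filter_true_of_mem fun k _ => (σ k).2.trans_le ht]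

theorem toggleState_succ (he : Function.Injective e) {t : ℕ} (ht : t < n) :
    toggleState A e σ (t + 1) = symmDiff (toggleState A e σ t) {e (σ.symm ⟨t, ht⟩)} := by
  have hfilter : (univ.filter fun k => (σ k : ℕ) < t + 1) =
      insert (σ.symm ⟨t, ht⟩) (univ.filter fun k => (σ k : ℕ) < t) := by
    ext k
    simp only [mem_filter, mem_univ, true_and, mem_insert, Equiv.eq_symm_apply, Fin.ext_iff]
    omega
  have hnew : e (σ.symm ⟨t, ht⟩) ∉ (univ.filter fun k => (σ k : ℕ) < t).image e := by
    simp [he.eq_iff]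
  rw [toggleState, toggleState, hfilter, image_insert, ← symmDiff_singleton_of_notMem hnew,
    symmDiff_assoc]

theorem mem_toggleState (he : Function.Injective e) {t : ℕ} (k : Fin n) :
    e k ∈ toggleState A e σ t ↔ (e k ∈ A ↔ t ≤ σ k) := by
  by_cases hA : e k ∈ A <;> simp [toggleState, mem_symmDiff, he.eq_iff, hA]

theorem toggleState_image {s : Finset (Fin n)} (he : Function.Injective e) (t : ℕ) :
    toggleState (s.image e) e σ t =
      (symmDiff s (univ.filter fun k => (σ k : ℕ) < t)).image e := by
  rw [toggleState, image_symmDiff _ _ he]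

theorem eq_of_toggleState_eq (he : Function.Injective e)
    (h : ∀ t ≤ n, toggleState A e σ t = toggleState A e σ' t) : σ = σ' := by
  have hlt : ∀ k, ∀ t ≤ n, t ≤ (σ k : ℕ) ↔ t ≤ (σ' k : ℕ) := fun k t ht => by
    have := mem_toggleState (A := A) (σ := σ) he k (t := t)
    rw [h t ht, mem_toggleState he] at this
    tauto
  ext k
  have h1 := hlt k (σ k + 1) (σ k).2
  have h2 := hlt k (σ' k + 1) (σ' k).2
  omega

theorem IsScenario.exists_perm_adj_eq_toggleState {G1 G2 : Genome V} {L : List (Genome V)}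
    (he : Function.Injective e) (hΔ : symmDiff G1.adj G2.adj = univ.image e)
    (hL : IsScenario G1 G2 L) (hlen : L.length = n + 1) :
    ∃ σ : Equiv.Perm (Fin n), ∀ t (ht : t < L.length),
      L[t].adj = toggleState G1.adj e σ t := by
  obtain ⟨hh, hl, hc⟩ := hL
  set f : ℕ → Finset (Sym2 V) := fun t => (L.getD t default).adj
  have hf : ∀ t (ht : t < L.length), f t = L[t].adj := fun t ht => by
    simp only [f, List.getD_eq_getElem _ _ ht]
  have hf0 : f 0 = G1.adj := by
    rw [hf 0 (by omega), (List.getElem_eq_iff _).mpr (by rwa [← List.head?_eq_getElem?])]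
  have hfn : f n = G2.adj := by
    rw [hf n (by omega),
      (List.getElem_eq_iff _).mpr (by rwa [List.getLast?_eq_getElem?, hlen] at hl)]
  have hstep : ∀ t : Fin n, ∃ p, f (t + 1) = symmDiff (f t) {p} := fun t => by
    obtain ⟨p, hp⟩ := scjStep_iff.mp (List.isChain_iff_getElem.mp hc t (by omega))
    exact ⟨p, by rw [hf t (by omega), hf (t + 1) (by omega), hp]⟩
  choose p hp using hstep
  -- Each of the `n` adjacencies of `G1 ∆ G2` is toggled at some step; as there are only `n`
  -- steps, `τ` below is a bijection.
  have hcover : ∀ k, ∃ t : Fin n, p t = e k := fun k =>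
    exists_eq_of_mem_symmDiff_of_toggle hp
      (by rw [hf0, hfn, hΔ]; exact mem_image_of_mem e (mem_univ k))
  choose τ hτ using hcover
  have hτ_inj : Function.Injective τ := fun k l h => he (by rw [← hτ, ← hτ, h])
  let σ := Equiv.ofBijective τ (Finite.injective_iff_bijective.mp hτ_inj)
  have hpσ : ∀ t, p t = e (σ.symm t) := fun t => by
    rw [← hτ]
    exact congrArg p (σ.apply_symm_apply t).symm
  have hfσ : ∀ t ≤ n, f t = toggleState G1.adj e σ t := by
    intro t
    induction t with
    | zero => simp [hf0]
    | succ t ih =>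
      intro ht
      rw [hp ⟨t, ht⟩, ih (by omega), toggleState_succ he ht, hpσ]
  exact ⟨σ, fun t ht => by rw [← hf t ht]; exact hfσ t (by omega)⟩

def toggleScenario (A : Finset (Sym2 V)) (e : Fin n → Sym2 V) (σ : Equiv.Perm (Fin n))
    (h : ∀ t ≤ n, IsMatching (toggleState A e σ t)) : List (Genome V) :=
  List.ofFn fun t : Fin (n + 1) => Genome.ofIsMatching (h t t.is_le)

@[simp]
theorem length_toggleScenario (h : ∀ t ≤ n, IsMatching (toggleState A e σ t)) :
    (toggleScenario A e σ h).length = n + 1 :=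
  List.length_ofFn

theorem adj_getElem_toggleScenario (h : ∀ t ≤ n, IsMatching (toggleState A e σ t)) {t : ℕ}
    (ht : t < (toggleScenario A e σ h).length) :
    (toggleScenario A e σ h)[t].adj = toggleState A e σ t := by
  simp only [toggleScenario, List.getElem_ofFn]
  rfl

theorem isScenario_toggleScenario {G1 G2 : Genome V} (he : Function.Injective e)
    (hΔ : symmDiff G1.adj G2.adj = univ.image e)
    (h : ∀ t ≤ n, IsMatching (toggleState G1.adj e σ t)) :
    IsScenario G1 G2 (toggleScenario G1.adj e σ h) := by
  refine ⟨?_, ?_, ?_⟩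
  · rw [List.head?_eq_getElem?, List.getElem?_eq_getElem (by simp)]
    exact congrArg some (Genome.ext (by rw [adj_getElem_toggleScenario, toggleState_zero]))
  · rw [List.getLast?_eq_getElem?, List.getElem?_eq_getElem (by simp)]
    refine congrArg some (Genome.ext ?_)
    rw [adj_getElem_toggleScenario, toggleState_of_le (by simp), ← hΔ,
      symmDiff_symmDiff_cancel_left]
  · rw [toggleScenario, List.Chain', List.isChain_ofFn]
    exact fun t ht => scjStep_iff.mpr ⟨_, toggleState_succ he (by omega)⟩

theorem toggleScenario_injective (he : Function.Injective e)
    {h : ∀ t ≤ n, IsMatching (toggleState A e σ t)}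
    {h' : ∀ t ≤ n, IsMatching (toggleState A e σ' t)}
    (heq : toggleScenario A e σ h = toggleScenario A e σ' h') : σ = σ' := by
  refine eq_of_toggleState_eq (A := A) he fun t ht => ?_
  rw [← adj_getElem_toggleScenario h (by simp; omega),
    ← adj_getElem_toggleScenario h' (by simp; omega)]
  exact congrArg Genome.adj (List.getElem_of_eq heq _)

theorem numMPS_eq_card_perm {G1 G2 : Genome V}
    (he : Function.Injective e) (hΔ : symmDiff G1.adj G2.adj = univ.image e) :
    NumMPS G1 G2 =
      Nat.card {σ : Equiv.Perm (Fin n) //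
        ∀ t ≤ n, IsMatching (toggleState G1.adj e σ t)} := by
  have hcard : #(symmDiff G1.adj G2.adj) = n := by
    rw [hΔ, card_image_of_injective _ he, card_univ, Fintype.card_fin]
  let F : {σ : Equiv.Perm (Fin n) // ∀ t ≤ n, IsMatching (toggleState G1.adj e σ t)} →
      {L | IsMPS G1 G2 L} := fun σ =>
    ⟨toggleScenario G1.adj e σ.1 σ.2,
      isMPS_iff.mpr ⟨isScenario_toggleScenario he hΔ σ.2, by simp [hcard]⟩⟩
  refine (Nat.card_coe_set_eq _).symm.trans (Nat.card_congr (Equiv.ofBijective F ⟨?_, ?_⟩).symm)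
  · exact fun σ σ' h => Subtype.ext (toggleScenario_injective (h := σ.2) (h' := σ'.2) he
      (congrArg Subtype.val h))
  · rintro ⟨L, hL⟩
    obtain ⟨hsc, hlen⟩ := isMPS_iff.mp hL
    rw [hcard] at hlen
    obtain ⟨σ, hσ⟩ := hsc.exists_perm_adj_eq_toggleState he hΔ hlen
    have hmatch : ∀ t ≤ n, IsMatching (toggleState G1.adj e σ t) := fun t ht => by
      rw [← hσ t (by omega)]
      exact Genome.isMatching _
    refine ⟨⟨σ, hmatch⟩, Subtype.ext (List.ext_getElem (by simp [F, hlen]) fun t _ _ => ?_)⟩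
    exact Genome.ext (by rw [adj_getElem_toggleScenario, hσ])

section WShaped

variable {n : ℕ}

def pathEdge (k : Fin n) : Sym2 ℕ := s(k, k + 1)

theorem pathEdge_injective : Function.Injective (pathEdge (n := n)) := fun k l h => by
  rw [pathEdge, pathEdge, Sym2.eq_iff] at h
  exact Fin.ext (by omega)

theorem isMatching_image_pathEdge {F : Finset (Fin n)} :
    IsMatching (F.image pathEdge) ↔ ∀ k ∈ F, ∀ l ∈ F, (l : ℕ) ≠ k + 1 := by
  constructor
  · rintro ⟨-, hdisj⟩ k hk l hl hkl
    refine hdisj _ (mem_image_of_mem _ hk) _ (mem_image_of_mem _ hl)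
      (fun h => by have := congrArg Fin.val (pathEdge_injective h); omega) l ?_ ?_ <;>
      simp [pathEdge, hkl]
  · refine fun H => ⟨?_, ?_⟩
    · simp [pathEdge]
    · simp only [mem_image, ne_eq, forall_exists_index, and_imp]
      rintro _ k hk rfl _ l hl rfl hkl x hxk hxl
      simp only [pathEdge, Sym2.mem_iff] at hxk hxl
      have hkl' : (k : ℕ) ≠ l := fun h => hkl (congrArg pathEdge (Fin.ext h))
      have := H k hk l hl
      have := H l hl k hk
      omega

theorem image_pathEdge_odd_symmDiff_even :
    symmDiff ((univ.filter fun k : Fin n => k.1 % 2 = 1).image pathEdge)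
      ((univ.filter fun k : Fin n => k.1 % 2 = 0).image pathEdge) =
      (univ : Finset (Fin n)).image pathEdge := by
  rw [← image_symmDiff _ _ pathEdge_injective]
  congr 1
  ext k
  simp only [mem_symmDiff, mem_filter, mem_univ, true_and, iff_true]
  omega

/-- In the W-shaped path the edges of odd index are cut and those of even index are joined;
this says that each join comes after the cuts of the neighbouring edges. -/
def JoinsAfterCuts (σ : Equiv.Perm (Fin n)) : Prop :=
  ∀ k l : Fin n, (l : ℕ) = k + 1 → if (k : ℕ) % 2 = 0 then σ l < σ k else σ k < σ l

theorem forall_isMatching_toggleState_iff {σ : Equiv.Perm (Fin n)} :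
    (∀ t ≤ n, IsMatching
      (toggleState ((univ.filter fun k : Fin n => k.1 % 2 = 1).image pathEdge) pathEdge σ t)) ↔
      JoinsAfterCuts σ := by
  simp only [toggleState_image pathEdge_injective, isMatching_image_pathEdge, mem_symmDiff,
    mem_filter, mem_univ, true_and]
  constructor
  · intro H k l hkl
    have hσ : (σ k : ℕ) ≠ σ l := fun h => by
      have := congrArg Fin.val (σ.injective (Fin.ext h)); omega
    split_ifs with hk
    · by_contra hlt
      rw [Fin.lt_def] at hlt
      exact H (σ k + 1) (σ k).2 k (by omega) l (by omega) hkl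
    · by_contra hlt
      rw [Fin.lt_def] at hlt
      exact H (σ l + 1) (σ l).2 k (by omega) l (by omega) hkl
  · intro H t ht k hk l hl hkl
    have := H k l hkl
    split_ifs at this <;> rw [Fin.lt_def] at this <;> omega

theorem joinsAfterCuts_iff_isAltPerm (σ : Equiv.Perm (Fin n)) :
    JoinsAfterCuts σ ↔ IsAltPerm (Fin.revPerm * σ) := by
  constructor
  · intro H j hj
    have := H ⟨j, by omega⟩ ⟨j + 1, hj⟩ rfl
    split_ifs at this ⊢ <;> simpa [Fin.rev_lt_rev] using this
  · rintro H ⟨k, hk⟩ ⟨l, hl⟩ (rfl : l = k + 1)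
    have := H k hl
    split_ifs at this ⊢ <;> simpa [Fin.rev_lt_rev] using this

theorem card_joinsAfterCuts (n : ℕ) :
    Nat.card {σ : Equiv.Perm (Fin n) // JoinsAfterCuts σ} = altPermCount n :=
  Nat.card_congr (Equiv.subtypeEquiv (Equiv.mulLeft Fin.revPerm) joinsAfterCuts_iff_isAltPerm)

theorem image_Icc_one_eq_image_pathEdge_odd (i : ℕ) :
    (Icc 1 i).image (fun j => s(2 * j - 1, 2 * j)) =
      (univ.filter fun k : Fin (2 * i + 1) => k.1 % 2 = 1).image pathEdge := by
  ext x
  simp only [mem_image, mem_filter, mem_univ, true_and, mem_Icc, pathEdge]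
  constructor
  · rintro ⟨j, hj, rfl⟩
    exact ⟨⟨2 * j - 1, by omega⟩, by simp only; omega,
      by simp only [Nat.sub_add_cancel (by omega : 1 ≤ 2 * j)]⟩
  · rintro ⟨k, hk, rfl⟩
    refine ⟨(k + 1) / 2, by omega, ?_⟩
    rw [show 2 * ((k.1 + 1) / 2) - 1 = k by omega, show 2 * ((k.1 + 1) / 2) = k + 1 by omega]

theorem image_Icc_zero_eq_image_pathEdge_even (i : ℕ) :
    (Icc 0 i).image (fun j => s(2 * j, 2 * j + 1)) =
      (univ.filter fun k : Fin (2 * i + 1) => k.1 % 2 = 0).image pathEdge := by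
  ext x
  simp only [mem_image, mem_filter, mem_univ, true_and, mem_Icc, pathEdge]
  constructor
  · rintro ⟨j, hj, rfl⟩
    exact ⟨⟨2 * j, by omega⟩, by simp, rfl⟩
  · rintro ⟨k, hk, rfl⟩
    refine ⟨k / 2, by omega, ?_⟩
    rw [show 2 * (k.1 / 2) = k by omega]

end WShaped

/-- For the pair of genomes forming a single W-shaped path with `i ≥ 0`
adjacencies in `G1` (extremities `0, …, 2i+1`, `Π1 = {{2j-1, 2j} : 1 ≤ j ≤ i}`,
`Π2 = {{2j, 2j+1} : 0 ≤ j ≤ i}`), the number of most parsimonious SCJ scenarios from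
`G1` to `G2` equals `A (2i+1)`, the number of alternating permutations of size `2i+1`. -/
theorem wShaped_count (i : ℕ) (G1 G2 : Genome ℕ)
    (h1 : G1.adj = (Finset.Icc 1 i).image fun j => s(2 * j - 1, 2 * j))
    (h2 : G2.adj = (Finset.Icc 0 i).image fun j => s(2 * j, 2 * j + 1)) :
    NumMPS G1 G2 = altPermCount (2 * i + 1) := by
  rw [image_Icc_one_eq_image_pathEdge_odd] at h1
  rw [image_Icc_zero_eq_image_pathEdge_even] at h2
  have hΔ : symmDiff G1.adj G2.adj = (univ : Finset (Fin (2 * i + 1))).image pathEdge := by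
    rw [h1, h2, image_pathEdge_odd_symmDiff_even]
  rw [numMPS_eq_card_perm pathEdge_injective hΔ, h1, ← card_joinsAfterCuts]
  exact Nat.card_congr (Equiv.subtypeEquivRight fun σ => forall_isMatching_toggleState_iff)
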